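/- arXiv:1709.01896 — 8 statements merged into one kernel-verified Lean document; each statement's English description precedes it below -/
import Mathlib

section
/- Let ν be a probability measure on ℕ with finite second moment and ν(0)+ν(1)<1. Let m₁ and m₂ denote the first and second factorial moments of ν, and G its probability generating function. Then for every s ∈ [0,1], (m₁ - 1 + ν(0))·(s-1)² ≤ G(s) - 1 - (s-1)·m₁ ≤ (1/2)·m₂·(s-1)². -/
/-- Probability generating function of a distribution on ℕ. -/
noncomputable def pgf (ν : ℕ → ℝ) (s : ℝ) : ℝ := ∑' k : ℕ, ν k * s ^ k

lemma key_lower (t : ℝ) (ht0 : 0 ≤ t) (ht1 : t ≤ 1) :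
    ∀ k : ℕ, 1 ≤ k → ((k : ℝ) - 1) * t ^ 2 ≤ (1 - t) ^ k - 1 + k * t := by
  intro k hk
  induction k, hk using Nat.le_induction with
  | base => norm_num
  | succ k hk ih =>
    have hpow : (1 - t) ^ k ≤ (1 - t) ^ 1 :=
      pow_le_pow_of_le_one (by linarith) (by linarith) hk
    have h1 : (1 - t) ^ (k + 1) = (1 - t) ^ k * (1 - t) := by ring
    push_cast
    rw [h1]
    push_cast at ih
    nlinarith [pow_nonneg (by linarith : (0:ℝ) ≤ 1 - t) k]

lemma key_upper (t : ℝ) (ht0 : 0 ≤ t) (ht1 : t ≤ 1) :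
    ∀ k : ℕ, (1 - t) ^ k - 1 + k * t ≤ (1 / 2) * k * ((k : ℝ) - 1) * t ^ 2 := by
  intro k
  induction k with
  | zero => norm_num
  | succ k ih =>
    have hbern : 1 + (k : ℝ) * (-t) ≤ (1 + (-t)) ^ k :=
      one_add_mul_le_pow (by linarith) k
    have h1 : (1 - t) ^ (k + 1) = (1 - t) ^ k * (1 - t) := by ring
    push_cast
    rw [h1]
    push_cast at ih
    have h2 : (1 : ℝ) + (-t) = 1 - t := by ring
    rw [h2] at hbern
    nlinarith [pow_nonneg (by linarith : (0:ℝ) ≤ 1 - t) k]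

/-- bounds on `G(s) - 1 - (s-1) m₁` for `s ∈ [0,1]`. -/
theorem stmt0 (ν : ℕ → ℝ) (hnn : ∀ k, 0 ≤ ν k) (hsum : ∑' k : ℕ, ν k = 1)
    (hm2sum : Summable fun k : ℕ => (k : ℝ) ^ 2 * ν k)
    (h01 : ν 0 + ν 1 < 1)
    (m1 m2 : ℝ)
    (hm1 : m1 = ∑' k : ℕ, (k : ℝ) * ν k)
    (hm2 : m2 = ∑' k : ℕ, (k : ℝ) * ((k : ℝ) - 1) * ν k) :
    ∀ s ∈ Set.Icc (0 : ℝ) 1,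
      (m1 - 1 + ν 0) * (s - 1) ^ 2 ≤ pgf ν s - 1 - (s - 1) * m1 ∧
      pgf ν s - 1 - (s - 1) * m1 ≤ (1 / 2) * m2 * (s - 1) ^ 2 := by
  intro s hs
  obtain ⟨hs0, hs1⟩ := hs
  set t : ℝ := 1 - s with ht
  have ht0 : 0 ≤ t := by simp [ht]; linarith
  have ht1 : t ≤ 1 := by simp [ht]; linarith
  -- summabilities
  have hν : Summable ν := by
    by_contra h
    rw [tsum_eq_zero_of_not_summable h] at hsum
    norm_num at hsum
  have hS1 : Summable fun k : ℕ => (k : ℝ) * ν k := by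
    apply hm2sum.of_nonneg_of_le (fun k => mul_nonneg (Nat.cast_nonneg k) (hnn k))
    intro k
    have hk : (k : ℝ) ≤ (k : ℝ) ^ 2 := by
      exact_mod_cast Nat.le_self_pow two_ne_zero k
    exact mul_le_mul_of_nonneg_right hk (hnn k)
  have hS2 : Summable fun k : ℕ => (k : ℝ) * ((k : ℝ) - 1) * ν k := by
    apply (hm2sum.sub hS1).congr
    intro k; ring
  have hspow : ∀ k : ℕ, s ^ k ≤ 1 := fun k => pow_le_one₀ hs0 hs1
  have hpgfS : Summable fun k : ℕ => ν k * s ^ k := by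
    apply hν.of_nonneg_of_le
      (fun k => mul_nonneg (hnn k) (pow_nonneg hs0 k))
    intro k
    calc ν k * s ^ k ≤ ν k * 1 := mul_le_mul_of_nonneg_left (hspow k) (hnn k)
    _ = ν k := by ring
  -- the central series
  have hF : pgf ν s - 1 - (s - 1) * m1
      = ∑' k : ℕ, (ν k * s ^ k - ν k - (s - 1) * ((k : ℝ) * ν k)) := by
    rw [pgf, hm1, ← hsum, ← tsum_mul_left,
      ← Summable.tsum_sub hpgfS hν, ← Summable.tsum_sub (hpgfS.sub hν) (hS1.mul_left _)]
  have hFS : Summable fun k : ℕ => ν k * s ^ k - ν k - (s - 1) * ((k : ℝ) * ν k) :=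
    (hpgfS.sub hν).sub (hS1.mul_left _)
  constructor
  · -- lower bound
    have hindS : Summable fun k : ℕ => (if k = 0 then ν 0 else 0 : ℝ) := by
      apply summable_of_ne_finset_zero (s := {0})
      intro k hk
      simp at hk
      simp [hk]
    have hL : (m1 - 1 + ν 0) * (s - 1) ^ 2
        = ∑' k : ℕ, ((((k : ℝ) - 1) * ν k + (if k = 0 then ν 0 else 0)) * (s - 1) ^ 2) := by
      have hd : Summable fun k : ℕ => ((k : ℝ) - 1) * ν k := by
        apply (hS1.sub hν).congr; intro k; ring
      have hm1' : ∑' k : ℕ, (((k : ℝ) - 1) * ν k) = m1 - 1 := by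
        calc ∑' k : ℕ, (((k : ℝ) - 1) * ν k)
            = ∑' k : ℕ, ((k : ℝ) * ν k - ν k) := by
              apply tsum_congr; intro k; ring
          _ = (∑' k : ℕ, (k : ℝ) * ν k) - ∑' k : ℕ, ν k := Summable.tsum_sub hS1 hν
          _ = m1 - 1 := by rw [hm1, hsum]
      have h1 : m1 - 1 + ν 0
          = ∑' k : ℕ, (((k : ℝ) - 1) * ν k + (if k = 0 then ν 0 else 0)) := by
        rw [Summable.tsum_add hd hindS, hm1', tsum_ite_eq]
      rw [h1, ← tsum_mul_right]
    rw [hL, hF]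
    apply Summable.tsum_le_tsum _ _ hFS
    · intro k
      match k with
      | 0 => simp
      | (n + 1) =>
        have hkey := key_lower t ht0 ht1 (n + 1) (Nat.le_add_left 1 n)
        have h := mul_le_mul_of_nonneg_left hkey (hnn (n + 1))
        have hse : s = 1 - t := by rw [ht]; ring
        simp only [Nat.add_eq_zero, one_ne_zero, and_false, if_false]
        rw [hse]
        push_cast
        push_cast at h
        nlinarith [h]
    · apply Summable.mul_right
      apply Summable.add _ hindS
      apply (hS1.sub hν).congr
      intro k; ring
  · -- upper bound
    have hU : (1 / 2) * m2 * (s - 1) ^ 2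
        = ∑' k : ℕ, ((1 / 2) * ((k : ℝ) * ((k : ℝ) - 1) * ν k) * (s - 1) ^ 2) := by
      rw [hm2, ← tsum_mul_left, ← tsum_mul_right]
    rw [hU, hF]
    apply Summable.tsum_le_tsum _ hFS ((hS2.mul_left _).mul_right _)
    intro k
    have hkey := key_upper t ht0 ht1 k
    have h := mul_le_mul_of_nonneg_left hkey (hnn k)
    have hse : s = 1 - t := by rw [ht]; ring
    rw [hse]
    nlinarith [h]
end

section
/- Let ν be a probability measure on ℕ with finite second moment, ν(0)+ν(1)<1, and first factorial moment m₁ > 1. Then the survival probability α of a Bienaymé–Galton–Watson process with offspring distribution ν and one ancestor satisfies 2(m₁-1)/m₂ ≤ α ≤ (m₁-1)/(m₁-1+ν(0)), where m₂ is the second factorial moment of ν. -/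
lemma aux_bern (q : ℝ) (hq0 : 0 ≤ q) (hq1 : q ≤ 1) (k : ℕ) :
    1 - q ^ k ≤ (k : ℝ) * (1 - q) := by
  have h := one_add_mul_le_pow (a := q - 1) (by linarith : (-2:ℝ) ≤ q - 1) k
  rw [show (1:ℝ) + (q - 1) = q by ring] at h
  linarith

lemma aux_upper (q : ℝ) (hq0 : 0 ≤ q) (hq1 : q ≤ 1) (k : ℕ) :
    (k : ℝ) * (1 - q) - (1 - q ^ k) ≤ (1 - q) ^ 2 * ((k : ℝ) * ((k : ℝ) - 1) / 2) := by
  induction k with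
  | zero => simp
  | succ n ih =>
    have hb : (1 - q) * (1 - q ^ n) ≤ (1 - q) * ((n : ℝ) * (1 - q)) :=
      mul_le_mul_of_nonneg_left (aux_bern q hq0 hq1 n) (by linarith)
    rw [pow_succ]
    push_cast
    nlinarith [ih, hb]

lemma aux_onesub (q : ℝ) (hq0 : 0 ≤ q) (hq1 : q ≤ 1) (k : ℕ) (hk : 1 ≤ k) :
    1 - q ^ k ≤ (1 - q) * (1 + ((k : ℝ) - 1) * q) := by
  induction k, hk using Nat.le_induction with
  | base => simp
  | succ n hn ih =>
    have hqn : q ^ n ≤ q := by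
      have := pow_le_pow_of_le_one hq0 hq1 hn
      simpa using this
    have h2 : q ^ n * (1 - q) ≤ q * (1 - q) :=
      mul_le_mul_of_nonneg_right hqn (by linarith)
    rw [pow_succ]
    push_cast
    nlinarith [ih, h2]

lemma aux_lower (q : ℝ) (hq0 : 0 ≤ q) (hq1 : q ≤ 1) (k : ℕ) :
    (1 - q) ^ 2 * (if k = 0 then 0 else (k : ℝ) - 1) ≤ (k : ℝ) * (1 - q) - (1 - q ^ k) := by
  rcases Nat.eq_zero_or_pos k with h | h
  · subst h; simp
  · rw [if_neg h.ne']
    have h1 := aux_onesub q hq0 hq1 k h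
    nlinarith [h1]

/-- bounds on the survival probability `α = 1 - q` of a BGW process,
where `q` is the smallest fixed point of the generating function in `[0,1)`. -/
theorem stmt1 (ν : ℕ → ℝ) (hnn : ∀ k, 0 ≤ ν k) (hsum : ∑' k : ℕ, ν k = 1)
    (hm2sum : Summable fun k : ℕ => (k : ℝ) ^ 2 * ν k)
    (h01 : ν 0 + ν 1 < 1)
    (m1 m2 : ℝ)
    (hm1 : m1 = ∑' k : ℕ, (k : ℝ) * ν k)
    (hm2 : m2 = ∑' k : ℕ, (k : ℝ) * ((k : ℝ) - 1) * ν k)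
    (hm1gt : 1 < m1)
    (q : ℝ) (hq : q ∈ Set.Ico (0 : ℝ) 1) (hfix : pgf ν q = q)
    (hmin : ∀ x ∈ Set.Icc (0 : ℝ) 1, pgf ν x = x → q ≤ x)
    (α : ℝ) (hα : α = 1 - q) :
    2 * (m1 - 1) / m2 ≤ α ∧ α ≤ (m1 - 1) / (m1 - 1 + ν 0) := by
  obtain ⟨hq0, hq1⟩ := hq
  have hqle : q ≤ 1 := le_of_lt hq1
  have hα0 : 0 < α := by rw [hα]; linarith
  -- basic summability facts
  have hν : Summable ν := by
    by_contra h
    rw [tsum_eq_zero_of_not_summable h] at hsum; norm_num at hsum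
  have hk1 : Summable fun k : ℕ => (k : ℝ) * ν k := by
    apply hm2sum.of_nonneg_of_le (fun k => mul_nonneg (Nat.cast_nonneg k) (hnn k))
    intro k
    have h1 : (k : ℝ) ≤ (k : ℝ) ^ 2 := by
      rcases Nat.eq_zero_or_pos k with h | h
      · simp [h]
      · have : (1 : ℝ) ≤ (k : ℝ) := by exact_mod_cast h
        nlinarith
    exact mul_le_mul_of_nonneg_right h1 (hnn k)
  have hkk1 : Summable fun k : ℕ => (k : ℝ) * ((k : ℝ) - 1) * ν k := by
    apply hm2sum.of_nonneg_of_le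
    · intro k
      have : (0 : ℝ) ≤ (k : ℝ) * ((k : ℝ) - 1) := by
        rcases Nat.eq_zero_or_pos k with h | h
        · simp [h]
        · have : (1 : ℝ) ≤ (k : ℝ) := by exact_mod_cast h
          nlinarith
      exact mul_nonneg this (hnn k)
    · intro k
      have h1 : (k : ℝ) * ((k : ℝ) - 1) ≤ (k : ℝ) ^ 2 := by nlinarith [Nat.cast_nonneg (α := ℝ) k]
      exact mul_le_mul_of_nonneg_right h1 (hnn k)
  have hqk : Summable fun k : ℕ => ν k * q ^ k := by
    apply hν.of_nonneg_of_le (fun k => mul_nonneg (hnn k) (pow_nonneg hq0 k))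
    intro k
    have : q ^ k ≤ 1 := pow_le_one₀ hq0 hqle
    nlinarith [hnn k]
  have hG : (∑' k : ℕ, ν k * q ^ k) = q := hfix
  -- the middle function M
  have hMfun : (fun k : ℕ => ν k * ((k : ℝ) * (1 - q) - (1 - q ^ k)))
      = fun k : ℕ => ((1 - q) * ((k : ℝ) * ν k) - ν k) + ν k * q ^ k := by
    funext k; ring
  have hMsum : Summable (fun k : ℕ => ν k * ((k : ℝ) * (1 - q) - (1 - q ^ k))) := by
    rw [hMfun]
    exact ((hk1.mul_left _).sub hν).add hqk
  have hMval : (∑' k : ℕ, ν k * ((k : ℝ) * (1 - q) - (1 - q ^ k))) = α * (m1 - 1) := by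
    rw [hMfun, Summable.tsum_add ((hk1.mul_left _).sub hν) hqk,
        Summable.tsum_sub (hk1.mul_left _) hν, tsum_mul_left, hsum, hG, hα, hm1]
    ring
  -- the lower (left) function L
  have hLfun : (fun k : ℕ => ν k * ((1 - q) ^ 2 * (if k = 0 then 0 else (k : ℝ) - 1)))
      = fun k : ℕ => (1 - q) ^ 2 * ((k : ℝ) * ν k - ν k) + (1 - q) ^ 2 * (if k = 0 then ν 0 else 0) := by
    funext k
    rcases Nat.eq_zero_or_pos k with h | h
    · subst h; simp
    · rw [if_neg h.ne', if_neg h.ne']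
      ring
  have hitesum : Summable (fun k : ℕ => if k = 0 then ν 0 else 0) :=
    (hasSum_ite_eq (0 : ℕ) (ν 0)).summable
  have hitetsum : (∑' k : ℕ, if k = 0 then ν 0 else 0) = ν 0 :=
    (hasSum_ite_eq (0 : ℕ) (ν 0)).tsum_eq
  have hLsum : Summable (fun k : ℕ => ν k * ((1 - q) ^ 2 * (if k = 0 then 0 else (k : ℝ) - 1))) := by
    rw [hLfun]
    exact (((hk1.sub hν).mul_left _)).add (hitesum.mul_left _)
  have hLval : (∑' k : ℕ, ν k * ((1 - q) ^ 2 * (if k = 0 then 0 else (k : ℝ) - 1)))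
      = α ^ 2 * (m1 - 1 + ν 0) := by
    rw [hLfun, Summable.tsum_add ((hk1.sub hν).mul_left _) (hitesum.mul_left _),
        tsum_mul_left, tsum_mul_left, Summable.tsum_sub hk1 hν, hsum, hitetsum, hα, hm1]
    ring
  -- the upper (right) function R
  have hRfun : (fun k : ℕ => ν k * ((1 - q) ^ 2 * ((k : ℝ) * ((k : ℝ) - 1) / 2)))
      = fun k : ℕ => ((1 - q) ^ 2 / 2) * ((k : ℝ) * ((k : ℝ) - 1) * ν k) := by
    funext k; ring
  have hRsum : Summable (fun k : ℕ => ν k * ((1 - q) ^ 2 * ((k : ℝ) * ((k : ℝ) - 1) / 2))) := by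
    rw [hRfun]; exact hkk1.mul_left _
  have hRval : (∑' k : ℕ, ν k * ((1 - q) ^ 2 * ((k : ℝ) * ((k : ℝ) - 1) / 2)))
      = α ^ 2 * m2 / 2 := by
    rw [hRfun, tsum_mul_left, hα, hm2]; ring
  -- termwise inequalities
  have hLle : α ^ 2 * (m1 - 1 + ν 0) ≤ α * (m1 - 1) := by
    rw [← hLval, ← hMval]
    exact Summable.tsum_le_tsum (fun k => mul_le_mul_of_nonneg_left (aux_lower q hq0 hqle k) (hnn k)) hLsum hMsum
  have hRle : α * (m1 - 1) ≤ α ^ 2 * m2 / 2 := by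
    rw [← hMval, ← hRval]
    exact Summable.tsum_le_tsum (fun k => mul_le_mul_of_nonneg_left (aux_upper q hq0 hqle k) (hnn k)) hMsum hRsum
  -- cancel α
  have h1 : α * (m1 - 1 + ν 0) ≤ m1 - 1 :=
    le_of_mul_le_mul_left (by nlinarith [hLle]) hα0
  have h2 : m1 - 1 ≤ α * m2 / 2 :=
    le_of_mul_le_mul_left (by nlinarith [hRle]) hα0
  have hden : 0 < m1 - 1 + ν 0 := by have := hnn 0; linarith
  have hm2pos : 0 < m2 := by nlinarith [hα0, h2, hm1gt]
  constructor
  · rw [div_le_iff₀ hm2pos]; linarith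
  · rw [le_div_iff₀ hden]; linarith
end

section
/- Let p₁, p₂ be probability measures on ℕ and 0 < λ₁ ≤ λ₂ be reals. Then the total variation distance between the compound Poisson distributions CPois(λ₁,p₁) and CPois(λ₂,p₂) is at most 1 - e^{-(λ₂-λ₁)} + λ₁·d_TV(p₁,p₂). -/
/-!
Write `πλ` for the Poisson weights and `ν*ʲ` for convolution powers, so that
`CPois(λ, ν) = ∑ⱼ πλ(j) ν*ʲ`, and `‖·‖` for the `ℓ¹` norm. Splitting
`πλ₁(j) p₁*ʲ - πλ₂(j) p₂*ʲ = πλ₁(j) (p₁*ʲ - p₂*ʲ) + (πλ₁(j) - πλ₂(j)) p₂*ʲ` and exchanging sums gives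
`‖CPois(λ₁, p₁) - CPois(λ₂, p₂)‖ ≤ ∑ⱼ πλ₁(j) ‖p₁*ʲ - p₂*ʲ‖ + ‖πλ₁ - πλ₂‖`.
Convolution with a probability vector is an `ℓ¹` contraction, so `‖p₁*ʲ - p₂*ʲ‖ ≤ j ‖p₁ - p₂‖`,
and the Poisson mean turns the first sum into `λ₁ ‖p₁ - p₂‖`. For the second term,
`πλ₂ = π(λ₂-λ₁) * πλ₁` and `πλ₁ = δ₀ * πλ₁`, so `‖πλ₁ - πλ₂‖ ≤ ‖δ₀ - π(λ₂-λ₁)‖ = 2 (1 - e^{-(λ₂-λ₁)})`.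
-/

/-- `j`-fold convolution power of a distribution on ℕ. -/
noncomputable def convPow (ν : ℕ → ℝ) : ℕ → ℕ → ℝ
  | 0, k => if k = 0 then 1 else 0
  | (j + 1), k => ∑ i ∈ Finset.range (k + 1), ν i * convPow ν j (k - i)

/-- Probability mass function of the compound Poisson distribution `CPois(λ, ν)`. -/
noncomputable def cpois (lam : ℝ) (ν : ℕ → ℝ) (k : ℕ) : ℝ :=
  ∑' j : ℕ, Real.exp (-lam) * lam ^ j / (Nat.factorial j) * convPow ν j k

/-- Total variation distance between two distributions on ℕ. -/
noncomputable def dTV (p q : ℕ → ℝ) : ℝ := (1 / 2) * ∑' k : ℕ, |p k - q k|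

open Finset Nat

lemma Summable.of_tsum_ne_zero {ι α : Type*} [AddCommMonoid α] [TopologicalSpace α] {f : ι → α}
    (h : ∑' i, f i ≠ 0) : Summable f :=
  by_contra fun hf => h (tsum_eq_zero_of_not_summable hf)

lemma HasSum.norm_of_nonneg {ι : Type*} {f : ι → ℝ} {a : ℝ} (hf : HasSum f a)
    (h0 : ∀ i, 0 ≤ f i) : HasSum (‖f ·‖) a := by
  simpa only [Real.norm_of_nonneg (h0 _)] using hf

def cauchyConv {R : Type*} [Mul R] [AddCommMonoid R] (f g : ℕ → R) (k : ℕ) : R :=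
  ∑ i ∈ range (k + 1), f i * g (k - i)

section CauchyConv

variable {R : Type*}

lemma single_one_cauchyConv [Semiring R] (g : ℕ → R) : cauchyConv (Pi.single 0 1) g = g := by
  funext k
  rw [cauchyConv, sum_range_succ']
  simp

lemma cauchyConv_sub_cauchyConv [Ring R] (f₁ f₂ g₁ g₂ : ℕ → R) (k : ℕ) :
    cauchyConv f₁ g₁ k - cauchyConv f₂ g₂ k =
      cauchyConv f₁ (g₁ - g₂) k + cauchyConv (f₁ - f₂) g₂ k := by
  simp only [cauchyConv, Pi.sub_apply, mul_sub, sub_mul, sum_sub_distrib]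
  abel

variable [NormedRing R]

lemma norm_cauchyConv_le (f g : ℕ → R) (k : ℕ) :
    ‖cauchyConv f g k‖ ≤ cauchyConv (‖f ·‖) (‖g ·‖) k :=
  (norm_sum_le _ _).trans (sum_le_sum fun _ _ => norm_mul_le _ _)

lemma summable_norm_cauchyConv {f g : ℕ → R} (hf : Summable (‖f ·‖)) (hg : Summable (‖g ·‖)) :
    Summable (‖cauchyConv f g ·‖) :=
  summable_norm_sum_mul_range_of_summable_norm hf hg

lemma tsum_norm_cauchyConv_le {f g : ℕ → R} (hf : Summable (‖f ·‖)) (hg : Summable (‖g ·‖)) :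
    ∑' k, ‖cauchyConv f g k‖ ≤ (∑' k, ‖f k‖) * ∑' k, ‖g k‖ := by
  have hf' : Summable (‖‖f ·‖‖) := by simpa only [norm_norm] using hf
  have hg' : Summable (‖‖g ·‖‖) := by simpa only [norm_norm] using hg
  rw [tsum_mul_tsum_eq_tsum_sum_range_of_summable_norm hf' hg']
  exact (summable_norm_cauchyConv hf hg).tsum_le_tsum (norm_cauchyConv_le f g)
    (summable_norm_cauchyConv hf' hg').of_norm

lemma tsum_norm_cauchyConv_sub_le {f₁ f₂ g₁ g₂ : ℕ → R} (hf₁ : Summable (‖f₁ ·‖))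
    (hf₂ : Summable (‖f₂ ·‖)) (hg₁ : Summable (‖g₁ ·‖)) (hg₂ : Summable (‖g₂ ·‖)) :
    ∑' k, ‖cauchyConv f₁ g₁ k - cauchyConv f₂ g₂ k‖ ≤
      (∑' k, ‖f₁ k‖) * (∑' k, ‖g₁ k - g₂ k‖) + (∑' k, ‖f₁ k - f₂ k‖) * ∑' k, ‖g₂ k‖ := by
  have hf : Summable (‖(f₁ - f₂) ·‖) :=
    (hf₁.add hf₂).of_nonneg_of_le (fun _ => norm_nonneg _) fun _ => norm_sub_le _ _
  have hg : Summable (‖(g₁ - g₂) ·‖) :=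
    (hg₁.add hg₂).of_nonneg_of_le (fun _ => norm_nonneg _) fun _ => norm_sub_le _ _
  have hsplit := (summable_norm_cauchyConv hf₁ hg).add (summable_norm_cauchyConv hf hg₂)
  have hle : ∀ k, ‖cauchyConv f₁ g₁ k - cauchyConv f₂ g₂ k‖ ≤
      ‖cauchyConv f₁ (g₁ - g₂) k‖ + ‖cauchyConv (f₁ - f₂) g₂ k‖ := fun k => by
    rw [cauchyConv_sub_cauchyConv]
    exact norm_add_le _ _
  calc ∑' k, ‖cauchyConv f₁ g₁ k - cauchyConv f₂ g₂ k‖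
      ≤ ∑' k, (‖cauchyConv f₁ (g₁ - g₂) k‖ + ‖cauchyConv (f₁ - f₂) g₂ k‖) :=
        (hsplit.of_nonneg_of_le (fun _ => norm_nonneg _) hle).tsum_le_tsum hle hsplit
    _ = ∑' k, ‖cauchyConv f₁ (g₁ - g₂) k‖ + ∑' k, ‖cauchyConv (f₁ - f₂) g₂ k‖ :=
        (summable_norm_cauchyConv hf₁ hg).tsum_add (summable_norm_cauchyConv hf hg₂)
    _ ≤ _ := add_le_add (tsum_norm_cauchyConv_le hf₁ hg) (tsum_norm_cauchyConv_le hf hg₂)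

end CauchyConv

-- Mathlib's `poissonPMFReal` only takes a parameter in `ℝ≥0`.
noncomputable def poissonWeight (lam : ℝ) (j : ℕ) : ℝ := Real.exp (-lam) * lam ^ j / j !

lemma poissonWeight_nonneg {lam : ℝ} (h : 0 ≤ lam) (j : ℕ) : 0 ≤ poissonWeight lam j := by
  unfold poissonWeight
  positivity

lemma hasSum_poissonWeight (lam : ℝ) : HasSum (poissonWeight lam) 1 := by
  have h := (NormedSpace.expSeries_div_hasSum_exp (𝔸 := ℝ) lam).mul_left (Real.exp (-lam))
  rw [← Real.exp_eq_exp_ℝ, ← Real.exp_add, neg_add_cancel, Real.exp_zero] at h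
  show HasSum (fun j => Real.exp (-lam) * lam ^ j / j !) 1
  simpa only [mul_div_assoc] using h

lemma poissonWeight_add (a b : ℝ) (j : ℕ) :
    poissonWeight (a + b) j = cauchyConv (poissonWeight a) (poissonWeight b) j := by
  unfold poissonWeight cauchyConv
  rw [add_pow, mul_sum, sum_div]
  refine sum_congr rfl fun m hm => ?_
  have hmj : m ≤ j := Nat.lt_succ_iff.mp (mem_range.mp hm)
  have hfac : (j.choose m : ℝ) * m ! * (j - m)! = j ! := by
    exact_mod_cast Nat.choose_mul_factorial_mul_factorial hmj
  rw [neg_add, Real.exp_add]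
  field_simp
  linear_combination (a ^ m * b ^ (j - m)) * hfac

lemma hasSum_poissonWeight_mul_cast (lam : ℝ) :
    HasSum (fun j : ℕ => poissonWeight lam j * j) lam := by
  refine (hasSum_nat_add_iff' 1).mp ?_
  have hshift : ∀ j : ℕ, poissonWeight lam (j + 1) * ↑(j + 1) = lam * poissonWeight lam j := by
    intro j
    unfold poissonWeight
    rw [Nat.factorial_succ]
    push_cast
    field_simp
    ring
  simpa only [sum_range_one, Nat.cast_zero, mul_zero, sub_zero, mul_one, hshift] using
    (hasSum_poissonWeight lam).mul_left lam

lemma tsum_abs_single_sub_poissonWeight {δ : ℝ} (hδ : 0 ≤ δ) :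
    ∑' j, |(Pi.single 0 1 : ℕ → ℝ) j - poissonWeight δ j| = 2 * (1 - Real.exp (-δ)) := by
  set f : ℕ → ℝ := fun j => |(Pi.single 0 1 : ℕ → ℝ) j - poissonWeight δ j|
  have hzero : f 0 = 1 - Real.exp (-δ) := by
    have hexp : Real.exp (-δ) ≤ 1 := Real.exp_le_one_iff.mpr (neg_nonpos.mpr hδ)
    simp [f, poissonWeight, hexp]
  have hsucc (j : ℕ) : f (j + 1) = poissonWeight δ (j + 1) := by
    simp [f, abs_of_nonneg (poissonWeight_nonneg hδ _)]
  have htail : HasSum (fun j => f (j + 1)) (1 - Real.exp (-δ)) := by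
    simp only [hsucc]
    simpa [poissonWeight] using (hasSum_nat_add_iff' 1).mpr (hasSum_poissonWeight δ)
  rw [((summable_nat_add_iff 1).mp htail.summable).tsum_eq_zero_add, hzero, htail.tsum_eq]
  ring

lemma tsum_abs_poissonWeight_sub_le {a b : ℝ} (ha : 0 ≤ a) (hab : a ≤ b) :
    ∑' j, |poissonWeight a j - poissonWeight b j| ≤ 2 * (1 - Real.exp (-(b - a))) := by
  have hδ : 0 ≤ b - a := sub_nonneg.mpr hab
  have hnorm (c : ℝ) (hc : 0 ≤ c) : HasSum (‖poissonWeight c ·‖) 1 :=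
    (hasSum_poissonWeight c).norm_of_nonneg (poissonWeight_nonneg hc)
  have hsingle : Summable (‖(Pi.single 0 1 : ℕ → ℝ) ·‖) :=
    (hasSum_pi_single 0 (1 : ℝ)).summable.norm
  have h := tsum_norm_cauchyConv_sub_le (f₁ := Pi.single 0 1) (f₂ := poissonWeight (b - a))
    (g₁ := poissonWeight a) (g₂ := poissonWeight a) hsingle (hnorm _ hδ).summable
    (hnorm a ha).summable (hnorm a ha).summable
  rw [(hnorm a ha).tsum_eq, single_one_cauchyConv] at h
  simp only [sub_self, norm_zero, tsum_zero, mul_zero, zero_add, mul_one, Real.norm_eq_abs,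
    tsum_abs_single_sub_poissonWeight hδ] at h
  simpa only [← poissonWeight_add, sub_add_cancel] using h

lemma cpois_eq_tsum_poissonWeight (lam : ℝ) (ν : ℕ → ℝ) (k : ℕ) :
    cpois lam ν k = ∑' j, poissonWeight lam j * convPow ν j k := rfl

lemma convPow_succ (ν : ℕ → ℝ) (j : ℕ) : convPow ν (j + 1) = cauchyConv ν (convPow ν j) := rfl

lemma convPow_nonneg {ν : ℕ → ℝ} (hν : ∀ k, 0 ≤ ν k) (j k : ℕ) : 0 ≤ convPow ν j k := by
  induction j generalizing k with
  | zero => unfold convPow; split_ifs <;> norm_num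
  | succ j ih => exact sum_nonneg fun i _ => mul_nonneg (hν i) (ih _)

lemma hasSum_convPow {ν : ℕ → ℝ} (hν0 : ∀ k, 0 ≤ ν k) (hν : HasSum ν 1) (j : ℕ) :
    HasSum (convPow ν j) 1 := by
  induction j with
  | zero => exact hasSum_ite_eq 0 1
  | succ j ih =>
    have h := hasSum_sum_range_mul_of_summable_norm (hν.norm_of_nonneg hν0).summable
      (ih.norm_of_nonneg (convPow_nonneg hν0 j)).summable
    rwa [hν.tsum_eq, ih.tsum_eq, one_mul] at h

lemma tsum_abs_convPow_sub_le {ν₁ ν₂ : ℕ → ℝ} (h₁0 : ∀ k, 0 ≤ ν₁ k) (h₁ : HasSum ν₁ 1)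
    (h₂0 : ∀ k, 0 ≤ ν₂ k) (h₂ : HasSum ν₂ 1) (j : ℕ) :
    ∑' k, |convPow ν₁ j k - convPow ν₂ j k| ≤ j * ∑' k, |ν₁ k - ν₂ k| := by
  induction j with
  | zero => simp [convPow]
  | succ j ih =>
    have hn₁ := h₁.norm_of_nonneg h₁0
    have hc₁ := (hasSum_convPow h₁0 h₁ j).norm_of_nonneg (convPow_nonneg h₁0 j)
    have hc₂ := (hasSum_convPow h₂0 h₂ j).norm_of_nonneg (convPow_nonneg h₂0 j)
    have h := tsum_norm_cauchyConv_sub_le hn₁.summable (h₂.norm_of_nonneg h₂0).summable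
      hc₁.summable hc₂.summable
    rw [hn₁.tsum_eq, hc₂.tsum_eq] at h
    simp only [Real.norm_eq_abs, one_mul, mul_one] at h
    rw [convPow_succ, convPow_succ]
    push_cast
    linarith

lemma tsum_abs_tsum_le_of_abs_le {ι κ : Type*} {a b : ι → κ → ℝ} (hab : ∀ j k, |a j k| ≤ b j k)
    (hb : ∀ j, Summable (b j)) (hb' : Summable fun j => ∑' k, b j k) :
    ∑' k, |∑' j, a j k| ≤ ∑' j, ∑' k, b j k := by
  have hprod : Summable (Function.uncurry b) :=
    (summable_prod_of_nonneg fun p => (abs_nonneg _).trans (hab p.1 p.2)).mpr ⟨hb, hb'⟩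
  have hcols : Summable fun k => ∑' j, b j k := hprod.prod_symm.prod
  have hrows (k : κ) : Summable fun j => b j k := hprod.prod_symm.prod_factor k
  have hpt (k : κ) : |∑' j, a j k| ≤ ∑' j, b j k := by
    simpa only [Real.norm_eq_abs] using
      tsum_of_norm_bounded (hrows k).hasSum fun j => (Real.norm_eq_abs _).trans_le (hab j k)
  rw [← hprod.tsum_comm]
  exact (hcols.of_nonneg_of_le (fun _ => abs_nonneg _) hpt).tsum_le_tsum hpt hcols

lemma summable_mul_of_hasSum_one {ι κ : Type*} {w : ι → ℝ} {c : ι → κ → ℝ} (hw : Summable w)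
    (hc0 : ∀ j k, 0 ≤ c j k) (hc : ∀ j, HasSum (c j) 1) (k : κ) :
    Summable fun j => w j * c j k := by
  refine hw.abs.of_norm_bounded fun j => ?_
  rw [Real.norm_eq_abs, abs_mul, abs_of_nonneg (hc0 j k)]
  exact mul_le_of_le_one_right (abs_nonneg _) (le_hasSum (hc j) k fun _ _ => hc0 j _)

lemma abs_mul_sub_mul_le {w₁ w₂ c₁ c₂ : ℝ} (hw₁ : 0 ≤ w₁) (hc₂ : 0 ≤ c₂) :
    |w₁ * c₁ - w₂ * c₂| ≤ w₁ * |c₁ - c₂| + |w₁ - w₂| * c₂ := by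
  calc |w₁ * c₁ - w₂ * c₂| = |w₁ * (c₁ - c₂) + (w₁ - w₂) * c₂| := by
        congr 1
        ring
    _ ≤ _ := by
      refine (abs_add_le _ _).trans_eq ?_
      rw [abs_mul, abs_mul, abs_of_nonneg hw₁, abs_of_nonneg hc₂]

lemma tsum_abs_mixture_sub_le {ι κ : Type*} {w₁ w₂ D : ι → ℝ} {c₁ c₂ : ι → κ → ℝ}
    (hw₁0 : ∀ j, 0 ≤ w₁ j) (hw₁ : Summable w₁) (hw₂ : Summable w₂)
    (hc₁0 : ∀ j k, 0 ≤ c₁ j k) (hc₁ : ∀ j, HasSum (c₁ j) 1)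
    (hc₂0 : ∀ j k, 0 ≤ c₂ j k) (hc₂ : ∀ j, HasSum (c₂ j) 1)
    (hD : ∀ j, ∑' k, |c₁ j k - c₂ j k| ≤ D j) (hwD : Summable fun j => w₁ j * D j) :
    ∑' k, |∑' j, w₁ j * c₁ j k - ∑' j, w₂ j * c₂ j k| ≤
      ∑' j, w₁ j * D j + ∑' j, |w₁ j - w₂ j| := by
  set b : ι → κ → ℝ := fun j k => w₁ j * |c₁ j k - c₂ j k| + |w₁ j - w₂ j| * c₂ j k
  have hb (j : ι) : HasSum (b j) (w₁ j * ∑' k, |c₁ j k - c₂ j k| + |w₁ j - w₂ j|) := by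
    have hdiff := ((hc₁ j).summable.sub (hc₂ j).summable).abs.hasSum
    simpa only [mul_one] using (hdiff.mul_left (w₁ j)).add ((hc₂ j).mul_left |w₁ j - w₂ j|)
  have hbD (j : ι) : ∑' k, b j k ≤ w₁ j * D j + |w₁ j - w₂ j| := by
    rw [(hb j).tsum_eq]
    gcongr
    · exact hw₁0 j
    · exact hD j
  have hw : Summable fun j => |w₁ j - w₂ j| := (hw₁.sub hw₂).abs
  have hb' : Summable fun j => ∑' k, b j k :=
    (hwD.add hw).of_nonneg_of_le (fun j => tsum_nonneg fun k => (abs_nonneg _).trans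
      (abs_mul_sub_mul_le (hw₁0 j) (hc₂0 j k))) hbD
  calc ∑' k, |∑' j, w₁ j * c₁ j k - ∑' j, w₂ j * c₂ j k|
      = ∑' k, |∑' j, (w₁ j * c₁ j k - w₂ j * c₂ j k)| := by
        simp_rw [← (summable_mul_of_hasSum_one hw₁ hc₁0 hc₁ _).tsum_sub
          (summable_mul_of_hasSum_one hw₂ hc₂0 hc₂ _)]
    _ ≤ ∑' j, ∑' k, b j k := tsum_abs_tsum_le_of_abs_le
        (fun j k => abs_mul_sub_mul_le (hw₁0 j) (hc₂0 j k)) (fun j => (hb j).summable) hb'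
    _ ≤ ∑' j, (w₁ j * D j + |w₁ j - w₂ j|) := hb'.tsum_le_tsum hbD (hwD.add hw)
    _ = _ := hwD.tsum_add hw

/-- coupling bound on the total variation distance between two
compound Poisson distributions. -/
theorem stmt2 (p1 p2 : ℕ → ℝ)
    (h1nn : ∀ k, 0 ≤ p1 k) (h1sum : ∑' k : ℕ, p1 k = 1)
    (h2nn : ∀ k, 0 ≤ p2 k) (h2sum : ∑' k : ℕ, p2 k = 1)
    (lam1 lam2 : ℝ) (hl : 0 < lam1) (hle : lam1 ≤ lam2) :
    dTV (cpois lam1 p1) (cpois lam2 p2) ≤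
      1 - Real.exp (-(lam2 - lam1)) + lam1 * dTV p1 p2 := by
  have hp1 : HasSum p1 1 := h1sum ▸ (Summable.of_tsum_ne_zero (h1sum ▸ one_ne_zero)).hasSum
  have hp2 : HasSum p2 1 := h2sum ▸ (Summable.of_tsum_ne_zero (h2sum ▸ one_ne_zero)).hasSum
  set S := ∑' k, |p1 k - p2 k|
  have hmean : HasSum (fun j : ℕ => poissonWeight lam1 j * (j * S)) (lam1 * S) := by
    simpa only [mul_assoc] using (hasSum_poissonWeight_mul_cast lam1).mul_right S
  have hmix := tsum_abs_mixture_sub_le (poissonWeight_nonneg hl.le)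
    (hasSum_poissonWeight lam1).summable (hasSum_poissonWeight lam2).summable
    (convPow_nonneg h1nn) (hasSum_convPow h1nn hp1) (convPow_nonneg h2nn) (hasSum_convPow h2nn hp2)
    (tsum_abs_convPow_sub_le h1nn hp1 h2nn hp2) hmean.summable
  rw [hmean.tsum_eq] at hmix
  have hpoisson := tsum_abs_poissonWeight_sub_le hl.le hle
  simp only [dTV, cpois_eq_tsum_poissonWeight]
  linarith
end

section
/- Let ν₁ and ν₂ be probability distributions on ℕ, and let T₁, T₂ be the total population sizes of BGW processes with one ancestor and offspring distributions ν₁, ν₂ respectively. Then for every k ∈ ℕ*, |P(T₁ ≥ k) - P(T₂ ≥ k)| ≤ d_TV(ν₁,ν₂) · ∑_{i=1}^{k-1} P(T₂ ≥ i). -/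
/-- Law of the total population size of a BGW process with one ancestor and offspring
distribution `ν`:  `P(T = k) = (1/k) P(X₁ + ⋯ + X_k = k - 1)` (Dwass identity / hitting
time of a random walk). -/
noncomputable def progenyPMF (ν : ℕ → ℝ) (k : ℕ) : ℝ :=
  if k = 0 then 0 else (1 / (k : ℝ)) * convPow ν k (k - 1)

/-- `P(T ≥ k)` (including `T = ∞`). -/
noncomputable def progenyTail (ν : ℕ → ℝ) (k : ℕ) : ℝ :=
  1 - ∑ i ∈ Finset.Ico 1 k, progenyPMF ν i

section GeneratingFunctions

open PowerSeries

theorem PowerSeries.coeff_X_mul_derivative {R : Type*} [CommSemiring R] (f : R⟦X⟧) (m : ℕ) :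
    coeff m (X * d⁄dX R f) = m * coeff m f := by
  cases m with
  | zero => simp
  | succ m => rw [coeff_succ_X_mul, coeff_derivative, mul_comm]; push_cast; rfl

theorem convPow_eq_coeff (q : ℕ → ℝ) (n s : ℕ) : convPow q n s = coeff s (mk q ^ n) := by
  induction n generalizing s with
  | zero => simp [convPow, coeff_one]
  | succ n ih =>
    rw [convPow, pow_succ', coeff_mul, Finset.Nat.sum_antidiagonal_eq_sum_range_succ_mk]
    simp only [coeff_mk, ih]

/-- Read off at `Xᵐ`, with `G = ∑ₐ q a Xᵃ`, from
`k (n + 1) Gⁿ⁺¹ + X (Gⁿ⁺¹)' = (n + 1) Gⁿ (k G + X G')`. -/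
theorem convPow_succ_mul_eq_sum (q : ℕ → ℝ) (n k m : ℕ) :
    (k * (n + 1) + m) * convPow q (n + 1) m =
      (n + 1) * ∑ a ∈ Finset.range (m + 1), (k + a) * q a * convPow q n (m - a) := by
  set F := mk q
  set G := mk fun a => (k + a) * q a
  have hG : G = C (k : ℝ) * F + X * d⁄dX ℝ F := by
    ext a
    rw [coeff_mk, map_add, coeff_C_mul, coeff_X_mul_derivative, coeff_mk]
    ring
  have hseries : C ((k * (n + 1) : ℕ) : ℝ) * F ^ (n + 1) + X * d⁄dX ℝ (F ^ (n + 1)) =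
      C ((n + 1 : ℕ) : ℝ) * (G * F ^ n) := by
    rw [hG, derivative_pow]
    simp only [map_natCast]
    push_cast
    ring
  have hsum : ∑ a ∈ Finset.range (m + 1), (k + a) * q a * convPow q n (m - a) =
      coeff m (G * F ^ n) := by
    rw [coeff_mul, Finset.Nat.sum_antidiagonal_eq_sum_range_succ_mk]
    simp only [G, coeff_mk, convPow_eq_coeff]
    rfl
  have hcoeff := congrArg (coeff m) hseries
  rw [map_add, coeff_C_mul, coeff_C_mul, coeff_X_mul_derivative, ← hsum,
    ← convPow_eq_coeff] at hcoeff
  push_cast at hcoeff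
  linear_combination hcoeff

end GeneratingFunctions

/-- `forestProgenyPMF q k n = P(T_k = n)` for the total progeny `T_k` of `k` independent trees:
the first explored individual has `a` children, leaving `k - 1 + a` trees to explore, and only
`a ≤ n` can contribute. -/
noncomputable def forestProgenyPMF (q : ℕ → ℝ) : ℕ → ℕ → ℝ
  | 0, n => if n = 0 then 1 else 0
  | _ + 1, 0 => 0
  | k + 1, n + 1 => ∑ a ∈ Finset.range (n + 1), q a * forestProgenyPMF q (k + a) n

theorem forestProgenyPMF_eq_zero_of_lt {q : ℕ → ℝ} {k n : ℕ} (hnk : n < k) :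
    forestProgenyPMF q k n = 0 := by
  induction n generalizing k with
  | zero => obtain ⟨k, rfl⟩ := Nat.exists_eq_add_one_of_ne_zero hnk.ne'; rfl
  | succ n ih =>
    obtain ⟨k, rfl⟩ := Nat.exists_eq_add_one_of_ne_zero (Nat.ne_zero_of_lt hnk)
    exact Finset.sum_eq_zero fun a _ => by rw [ih (by omega), mul_zero]

theorem natCast_mul_forestProgenyPMF (q : ℕ → ℝ) {k n : ℕ} (hkn : k ≤ n) :
    n * forestProgenyPMF q k n = k * convPow q n (n - k) := by
  induction n generalizing k with
  | zero => obtain rfl := Nat.le_zero.1 hkn; simp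
  | succ n ih =>
    cases k with
    | zero => simp [forestProgenyPMF]
    | succ k =>
      rcases Nat.eq_zero_or_pos n with rfl | hn
      · obtain rfl : k = 0 := by omega
        simp [forestProgenyPMF, convPow]
      have hsum : ∑ a ∈ Finset.range (n + 1), q a * (n * forestProgenyPMF q (k + a) n) =
          ∑ a ∈ Finset.range (n - k + 1), (k + a) * q a * convPow q n (n - k - a) := by
        refine (Finset.sum_subset (Finset.range_subset_range.2 (by omega)) fun a _ ha => ?_).symm
          |>.trans (Finset.sum_congr rfl fun a ha => ?_)
        · rw [Finset.mem_range] at ha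
          rw [forestProgenyPMF_eq_zero_of_lt (by omega), mul_zero, mul_zero]
        · rw [Finset.mem_range] at ha
          rw [ih (by omega), Nat.sub_sub]
          push_cast
          ring
      apply mul_left_cancel₀ (Nat.cast_ne_zero.2 hn.ne' : (n : ℝ) ≠ 0)
      calc (n : ℝ) * ((n + 1 : ℕ) * forestProgenyPMF q (k + 1) (n + 1))
          = (n + 1) * ∑ a ∈ Finset.range (n + 1), q a * (n * forestProgenyPMF q (k + a) n) := by
            rw [forestProgenyPMF, Finset.mul_sum, Finset.mul_sum, Finset.mul_sum]
            push_cast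
            exact Finset.sum_congr rfl fun a _ => by ring
        _ = (k * (n + 1) + (n - k : ℕ)) * convPow q (n + 1) (n - k) := by
            rw [hsum, convPow_succ_mul_eq_sum]
        _ = n * ((k + 1 : ℕ) * convPow q (n + 1) (n + 1 - (k + 1))) := by
            rw [Nat.add_sub_add_right]
            push_cast [Nat.cast_sub (by omega : k ≤ n)]
            ring

theorem progenyPMF_eq_forestProgenyPMF (ν : ℕ → ℝ) (n : ℕ) :
    progenyPMF ν n = forestProgenyPMF ν 1 n := by
  cases n with
  | zero => rfl
  | succ n =>
    have h := natCast_mul_forestProgenyPMF ν (Nat.le_add_left 1 n)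
    rw [Nat.cast_one, one_mul] at h
    rw [progenyPMF, if_neg n.succ_ne_zero, ← h, ← mul_assoc,
      one_div_mul_cancel (Nat.cast_ne_zero.2 n.succ_ne_zero), one_mul]

/-- `P(T_k > n)`. -/
noncomputable def forestProgenySurvival (q : ℕ → ℝ) (k n : ℕ) : ℝ :=
  1 - ∑ m ∈ Finset.range (n + 1), forestProgenyPMF q k m

theorem progenyTail_succ (ν : ℕ → ℝ) (n : ℕ) :
    progenyTail ν (n + 1) = forestProgenySurvival ν 1 n := by
  rw [progenyTail, forestProgenySurvival, Finset.sum_range_succ', Finset.sum_Ico_eq_sum_range]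
  simp [progenyPMF_eq_forestProgenyPMF, forestProgenyPMF, add_comm]

theorem forestProgenySurvival_zero_left (q : ℕ → ℝ) (n : ℕ) : forestProgenySurvival q 0 n = 0 := by
  rw [forestProgenySurvival, Finset.sum_range_succ']
  simp [forestProgenyPMF]

theorem forestProgenySurvival_succ_zero (q : ℕ → ℝ) (k : ℕ) :
    forestProgenySurvival q (k + 1) 0 = 1 := by
  simp [forestProgenySurvival, forestProgenyPMF]

theorem hasSum_mul_forestProgenyPMF (q : ℕ → ℝ) (k n : ℕ) :
    HasSum (fun a => q a * forestProgenyPMF q (k + a) n) (forestProgenyPMF q (k + 1) (n + 1)) :=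
  hasSum_sum_of_ne_finset_zero fun a ha => by
    rw [Finset.mem_range] at ha
    rw [forestProgenyPMF_eq_zero_of_lt (by omega), mul_zero]

theorem hasSum_mul_forestProgenySurvival {q : ℕ → ℝ} (hq : HasSum q 1) (k n : ℕ) :
    HasSum (fun a => q a * forestProgenySurvival q (k + a) n)
      (forestProgenySurvival q (k + 1) (n + 1)) := by
  have hpmf := hasSum_sum fun m (_ : m ∈ Finset.range (n + 1)) =>
    hasSum_mul_forestProgenyPMF q k m
  have hT : forestProgenySurvival q (k + 1) (n + 1) =
      1 - ∑ m ∈ Finset.range (n + 1), forestProgenyPMF q (k + 1) (m + 1) := by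
    rw [forestProgenySurvival, Finset.sum_range_succ' _ (n + 1)]
    simp [forestProgenyPMF]
  rw [hT]
  exact (hq.sub hpmf).congr_fun fun a => by
    rw [forestProgenySurvival, mul_sub, mul_one, Finset.mul_sum]

theorem forestProgenySurvival_mem_Icc {q : ℕ → ℝ} (hq0 : ∀ a, 0 ≤ q a) (hq : HasSum q 1)
    (k n : ℕ) : forestProgenySurvival q k n ∈ Set.Icc 0 1 := by
  induction n generalizing k with
  | zero => cases k <;> simp [forestProgenySurvival_zero_left, forestProgenySurvival_succ_zero]
  | succ n ih =>
    cases k with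
    | zero => simp [forestProgenySurvival_zero_left]
    | succ k =>
      have h := hasSum_mul_forestProgenySurvival hq k n
      exact ⟨h.nonneg fun a => mul_nonneg (hq0 a) (ih _).1,
        hasSum_le (fun a => mul_le_of_le_one_right (hq0 a) (ih _).2) h hq⟩

theorem abs_sub_le_dTV {p q f : ℕ → ℝ} {s x y : ℝ} (hp : HasSum p s) (hq : HasSum q s)
    (hf : ∀ a, f a ∈ Set.Icc 0 1) (hx : HasSum (fun a => p a * f a) x)
    (hy : HasSum (fun a => q a * f a) y) : |x - y| ≤ dTV p q := by
  have hcentred : HasSum (fun a => (p a - q a) * (f a - 1 / 2)) (x - y) := by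
    have h := (hx.sub hy).sub ((hp.sub hq).mul_left (1 / 2))
    rw [sub_self, mul_zero, sub_zero] at h
    exact h.congr_fun fun a => by ring
  have hdTV : HasSum (fun a => 1 / 2 * |p a - q a|) (dTV p q) :=
    (hp.summable.sub hq.summable).abs.hasSum.mul_left (1 / 2)
  refine hcentred.norm_le_of_bounded hdTV fun a => ?_
  have hcentre : |f a - 1 / 2| ≤ 1 / 2 := abs_le.2 ⟨by linarith [(hf a).1], by linarith [(hf a).2]⟩
  rw [Real.norm_eq_abs, abs_mul, mul_comm]
  exact mul_le_mul_of_nonneg_right hcentre (abs_nonneg _)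

theorem abs_forestProgenySurvival_sub_le {p q : ℕ → ℝ} (hp0 : ∀ a, 0 ≤ p a) (hp : HasSum p 1)
    (hq0 : ∀ a, 0 ≤ q a) (hq : HasSum q 1) (k n : ℕ) :
    |forestProgenySurvival p k n - forestProgenySurvival q k n| ≤
      dTV p q * ∑ j ∈ Finset.range n, forestProgenySurvival q k j := by
  induction n generalizing k with
  | zero => cases k <;> simp [forestProgenySurvival_zero_left, forestProgenySurvival_succ_zero]
  | succ n ih =>
    cases k with
    | zero => simp [forestProgenySurvival_zero_left]
    | succ k =>
      set Sp := fun a => forestProgenySurvival p (k + a) n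
      have hSp : ∀ a, Sp a ∈ Set.Icc 0 1 := fun a => forestProgenySurvival_mem_Icc hp0 hp _ _
      have hmixed : Summable fun a => q a * Sp a :=
        hq.summable.of_nonneg_of_le (fun a => mul_nonneg (hq0 a) (hSp a).1)
          fun a => mul_le_of_le_one_right (hq0 a) (hSp a).2
      have hoffspring : |forestProgenySurvival p (k + 1) (n + 1) - ∑' a, q a * Sp a| ≤ dTV p q :=
        abs_sub_le_dTV hp hq hSp (hasSum_mul_forestProgenySurvival hp k n) hmixed.hasSum
      have hsubtrees : |∑' a, q a * Sp a - forestProgenySurvival q (k + 1) (n + 1)| ≤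
          dTV p q * ∑ j ∈ Finset.range n, forestProgenySurvival q (k + 1) (j + 1) := by
        have hbound := (hasSum_sum fun j (_ : j ∈ Finset.range n) =>
          hasSum_mul_forestProgenySurvival hq k j).mul_left (dTV p q)
        refine (hmixed.hasSum.sub (hasSum_mul_forestProgenySurvival hq k n)).norm_le_of_bounded
          hbound fun a => ?_
        rw [Real.norm_eq_abs, ← mul_sub, abs_mul, abs_of_nonneg (hq0 a), ← Finset.mul_sum,
          mul_left_comm]
        exact mul_le_mul_of_nonneg_left (ih _) (hq0 a)
      calc _ ≤ dTV p q + dTV p q * ∑ j ∈ Finset.range n, forestProgenySurvival q (k + 1) (j + 1) :=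
            (abs_sub_le _ _ _).trans (add_le_add hoffspring hsubtrees)
        _ = _ := by
          rw [Finset.sum_range_succ', forestProgenySurvival_succ_zero]
          ring

theorem hasSum_of_tsum_eq_of_ne_zero {α M : Type*} [AddCommMonoid M] [TopologicalSpace M]
    {f : α → M} {a : M} (h : ∑' k, f k = a) (ha : a ≠ 0) :
    HasSum f a := by
  have hf : Summable f := by
    by_contra hf
    exact ha (h ▸ tsum_eq_zero_of_not_summable hf)
  exact h ▸ hf.hasSum

theorem sum_Icc_progenyTail (ν : ℕ → ℝ) (n : ℕ) :
    ∑ i ∈ Finset.Icc 1 n, progenyTail ν i = ∑ j ∈ Finset.range n, forestProgenySurvival ν 1 j := by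
  rw [← Finset.Ico_add_one_right_eq_Icc, Finset.sum_Ico_eq_sum_range]
  simp [add_comm, progenyTail_succ]

/-- comparison of the total population sizes of two BGW processes. -/
theorem stmt3 (ν1 ν2 : ℕ → ℝ)
    (h1nn : ∀ k, 0 ≤ ν1 k) (h1sum : ∑' k : ℕ, ν1 k = 1)
    (h2nn : ∀ k, 0 ≤ ν2 k) (h2sum : ∑' k : ℕ, ν2 k = 1) :
    ∀ k : ℕ, 1 ≤ k →
      |progenyTail ν1 k - progenyTail ν2 k| ≤
        dTV ν1 ν2 * ∑ i ∈ Finset.Icc 1 (k - 1), progenyTail ν2 i := by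
  intro k hk
  obtain ⟨n, rfl⟩ := Nat.exists_eq_add_of_le' hk
  rw [progenyTail_succ, progenyTail_succ, Nat.add_sub_cancel, sum_Icc_progenyTail]
  exact abs_forestProgenySurvival_sub_le h1nn (hasSum_of_tsum_eq_of_ne_zero h1sum one_ne_zero)
    h2nn (hasSum_of_tsum_eq_of_ne_zero h2sum one_ne_zero) 1 n
end

section
/- Let λ > 0, let ν be a probability measure on ℕ with generating function G_ν, and let a ∈ (0,1). Define ν̂_a(k) = aᵏν(k)/G_ν(a). Then for every k ∈ ℕ, CPois(λ·G_ν(a), ν̂_a)({k}) = aᵏ · e^{λ(1-G_ν(a))} · CPois(λ,ν)({k}). -/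
lemma convPow_tilt (ν : ℕ → ℝ) (a G : ℝ) :
    ∀ j k, convPow (fun i => a ^ i * ν i / G) j k = a ^ k / G ^ j * convPow ν j k := by
  intro j
  induction j with
  | zero =>
    intro k
    by_cases hk : k = 0 <;> simp [convPow, hk]
  | succ j ih =>
    intro k
    simp only [convPow, Finset.mul_sum]
    apply Finset.sum_congr rfl
    intro i hi
    have hik : i ≤ k := by
      have := Finset.mem_range.mp hi; omega
    rw [ih]
    have hpow : a ^ i * a ^ (k - i) = a ^ k := by
      rw [← pow_add]; congr 1; omega
    calc a ^ i * ν i / G * (a ^ (k - i) / G ^ j * convPow ν j (k - i))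
        = (a ^ i * a ^ (k - i)) * (ν i * convPow ν j (k - i)) / (G * G ^ j) := by
          simp only [div_eq_mul_inv, mul_inv]; ring
      _ = a ^ k / G ^ (j + 1) * (ν i * convPow ν j (k - i)) := by
          rw [hpow, pow_succ]; ring

/-- mass function of the exponentially tilted compound Poisson distribution. -/
theorem stmt6 (lam : ℝ) (hlam : 0 < lam)
    (ν : ℕ → ℝ) (hnn : ∀ k, 0 ≤ ν k) (hsum : ∑' k : ℕ, ν k = 1)
    (a : ℝ) (ha : a ∈ Set.Ioo (0 : ℝ) 1) (hG : 0 < pgf ν a) :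
    ∀ k : ℕ,
      cpois (lam * pgf ν a) (fun j => a ^ j * ν j / pgf ν a) k =
        a ^ k * Real.exp (lam * (1 - pgf ν a)) * cpois lam ν k := by
  intro k
  have hGne : pgf ν a ≠ 0 := ne_of_gt hG
  have hpt : ∀ j : ℕ,
      Real.exp (-(lam * pgf ν a)) * (lam * pgf ν a) ^ j / (Nat.factorial j) *
          convPow (fun i => a ^ i * ν i / pgf ν a) j k =
        a ^ k * Real.exp (lam * (1 - pgf ν a)) *
          (Real.exp (-lam) * lam ^ j / (Nat.factorial j) * convPow ν j k) := by
    intro j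
    rw [convPow_tilt, mul_pow]
    have hexp : Real.exp (-(lam * pgf ν a)) =
        Real.exp (lam * (1 - pgf ν a)) * Real.exp (-lam) := by
      rw [← Real.exp_add]; ring_nf
    rw [hexp]
    have hfac : (Nat.factorial j : ℝ) ≠ 0 := Nat.cast_ne_zero.mpr (Nat.factorial_ne_zero j)
    have hGj : (pgf ν a) ^ j ≠ 0 := pow_ne_zero _ hGne
    field_simp
  calc cpois (lam * pgf ν a) (fun j => a ^ j * ν j / pgf ν a) k
      = ∑' j : ℕ, a ^ k * Real.exp (lam * (1 - pgf ν a)) *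
          (Real.exp (-lam) * lam ^ j / (Nat.factorial j) * convPow ν j k) :=
        tsum_congr hpt
    _ = a ^ k * Real.exp (lam * (1 - pgf ν a)) * cpois lam ν k := tsum_mul_left
end

section
/- Let λ > 0, let ν be a probability measure on ℕ with generating function G_ν, a ∈ (0,1), and ν̂_a(k) = aᵏν(k)/G_ν(a). Let T̂_a^(u) be the total population size of a BGW process with u ancestors and offspring distribution CPois(λG_ν(a), ν̂_a), and T^(u) that with offspring distribution CPois(λ,ν). Then for every k ≥ u, P(T̂_a^(u) = k) = a^{k-u} · e^{kλ(1-G_ν(a))} · P(T^(u) = k). -/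
/-- Law of the total population size of a BGW process with `u` ancestors and offspring
distribution `μ` (Dwass identity). -/
noncomputable def bgwProgeny (μ : ℕ → ℝ) (u k : ℕ) : ℝ :=
  if k = 0 ∨ k < u then 0 else ((u : ℝ) / (k : ℝ)) * convPow μ k (k - u)

lemma convPow_scale (g : ℕ → ℝ) (a c : ℝ) :
    ∀ j m, convPow (fun k => a ^ k * g k * c) j m = a ^ m * c ^ j * convPow g j m := by
  intro j
  induction j with
  | zero =>
    intro m
    simp only [convPow, pow_zero]
    rcases eq_or_ne m 0 with h | h <;> simp [h]
  | succ j ih =>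
    intro m
    simp only [convPow, Finset.mul_sum]
    apply Finset.sum_congr rfl
    intro i hi
    rw [ih]
    have h1 : i + (m - i) = m := by
      have := Finset.mem_range.mp hi; omega
    have h2 : a ^ m = a ^ i * a ^ (m - i) := by rw [← pow_add, h1]
    rw [h2, pow_succ]
    ring

lemma cpois_tilt (lam : ℝ) (ν : ℕ → ℝ) (a : ℝ) (hG : 0 < pgf ν a) (k : ℕ) :
    cpois (lam * pgf ν a) (fun j => a ^ j * ν j / pgf ν a) k =
      a ^ k * Real.exp (lam * (1 - pgf ν a)) * cpois lam ν k := by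
  set G := pgf ν a with hGdef
  have hfun : (fun j => a ^ j * ν j / G) = fun j => a ^ j * ν j * G⁻¹ := by
    funext j; rw [div_eq_mul_inv]
  unfold cpois
  rw [hfun]
  rw [← tsum_mul_left]
  apply tsum_congr
  intro j
  rw [convPow_scale]
  have hE : Real.exp (-(lam * G)) = Real.exp (lam * (1 - G)) * Real.exp (-lam) := by
    rw [← Real.exp_add]; ring_nf
  have hGj : G ^ j * (G⁻¹) ^ j = 1 := by
    rw [← mul_pow, mul_inv_cancel₀ hG.ne', one_pow]
  calc Real.exp (-(lam * G)) * (lam * G) ^ j / (Nat.factorial j) *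
        (a ^ k * (G⁻¹) ^ j * convPow ν j k)
      = (G ^ j * (G⁻¹) ^ j) *
        (a ^ k * Real.exp (lam * (1 - G)) *
          (Real.exp (-lam) * lam ^ j / (Nat.factorial j) * convPow ν j k)) := by
        rw [hE, mul_pow]; ring
    _ = a ^ k * Real.exp (lam * (1 - G)) *
        (Real.exp (-lam) * lam ^ j / (Nat.factorial j) * convPow ν j k) := by
        rw [hGj, one_mul]

/-- relation between the total population size law of a BGW process with
tilted compound Poisson offspring and the untilted one. -/
theorem stmt7 (lam : ℝ) (hlam : 0 < lam)
    (ν : ℕ → ℝ) (hnn : ∀ k, 0 ≤ ν k) (hsum : ∑' k : ℕ, ν k = 1)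
    (a : ℝ) (ha : a ∈ Set.Ioo (0 : ℝ) 1) (hG : 0 < pgf ν a)
    (u : ℕ) (hu : 1 ≤ u) :
    ∀ k : ℕ, u ≤ k →
      bgwProgeny (cpois (lam * pgf ν a) (fun j => a ^ j * ν j / pgf ν a)) u k =
        a ^ (k - u) * Real.exp (k * lam * (1 - pgf ν a)) * bgwProgeny (cpois lam ν) u k := by
  intro k hk
  have hfun : cpois (lam * pgf ν a) (fun j => a ^ j * ν j / pgf ν a) =
      fun m => a ^ m * cpois lam ν m * Real.exp (lam * (1 - pgf ν a)) := by
    funext m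
    rw [cpois_tilt lam ν a hG m]
    ring
  unfold bgwProgeny
  rw [hfun, convPow_scale]
  have hexp : Real.exp (lam * (1 - pgf ν a)) ^ k = Real.exp (k * lam * (1 - pgf ν a)) := by
    rw [← Real.exp_nat_mul]; ring_nf
  rw [hexp]
  split_ifs with h
  · ring
  · ring
end

section
/- For every j ∈ ℕ*, all a,b ∈ ℝ₊ and all u ∈ [0, 1/(a+b)): 1 - (1-au)ʲ - (1-bu)ʲ + (1-(a+b)u)ʲ ≤ j(j-1)·a·b·u². -/
lemma stmt11_key : ∀ j : ℕ, ∀ x y : ℝ, 0 ≤ x → 0 ≤ y → x + y ≤ 1 →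
    (1 - y) ^ j - (1 - x - y) ^ j ≤ 1 - (1 - x) ^ j ∧
    1 - (1 - x) ^ j - (1 - y) ^ j + (1 - x - y) ^ j ≤ (j : ℝ) * ((j : ℝ) - 1) * x * y := by
  intro j
  induction j with
  | zero => intro x y hx hy hxy; norm_num
  | succ n ih =>
    intro x y hx hy hxy
    obtain ⟨h1, h2⟩ := ih x y hx hy hxy
    have hx1 : (0:ℝ) ≤ 1 - x := by linarith
    have hy1 : (0:ℝ) ≤ 1 - y := by linarith
    have hxy1 : (0:ℝ) ≤ 1 - x - y := by linarith
    have hpx : (0:ℝ) ≤ (1 - x) ^ n := pow_nonneg hx1 n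
    have hpy : (0:ℝ) ≤ (1 - y) ^ n := pow_nonneg hy1 n
    have hpxy : (0:ℝ) ≤ (1 - x - y) ^ n := pow_nonneg hxy1 n
    have hpxy_le : (1 - x - y) ^ n ≤ (1 - x) ^ n :=
      pow_le_pow_left₀ hxy1 (by linarith) n
    have hpx_le1 : (1 - x) ^ n ≤ 1 := pow_le_one₀ hx1 (by linarith)
    have hpy_le1 : (1 - y) ^ n ≤ 1 := pow_le_one₀ hy1 (by linarith)
    -- Bernoulli
    have hbx : 1 + (n : ℝ) * (-x) ≤ (1 + (-x)) ^ n :=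
      one_add_mul_le_pow (by linarith) n
    have hby : 1 + (n : ℝ) * (-y) ≤ (1 + (-y)) ^ n :=
      one_add_mul_le_pow (by linarith) n
    constructor
    · simp only [pow_succ]
      nlinarith [mul_le_mul_of_nonneg_left h1 hy1,
        mul_le_mul_of_nonneg_left hpxy_le hx,
        mul_nonneg hy (by linarith : (0:ℝ) ≤ 1 - (1-x)^n)]
    · push_cast
      have key : 1 - (1 - x) ^ (n+1) - (1 - y) ^ (n+1) + (1 - x - y) ^ (n+1)
          = (1 - x - y) * (1 - (1 - x) ^ n - (1 - y) ^ n + (1 - x - y) ^ n)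
            + x * (1 - (1 - y) ^ n) + y * (1 - (1 - x) ^ n) := by
        ring
      have hF0 : 0 ≤ 1 - (1 - x) ^ n - (1 - y) ^ n + (1 - x - y) ^ n := by linarith
      have b1 : x * (1 - (1 - y) ^ n) ≤ x * ((n:ℝ) * y) := by
        apply mul_le_mul_of_nonneg_left _ hx
        have := hby; ring_nf at this ⊢; nlinarith
      have b2 : y * (1 - (1 - x) ^ n) ≤ y * ((n:ℝ) * x) := by
        apply mul_le_mul_of_nonneg_left _ hy
        have := hbx; ring_nf at this ⊢; nlinarith
      have b3 : (1 - x - y) * (1 - (1 - x) ^ n - (1 - y) ^ n + (1 - x - y) ^ n)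
          ≤ 1 - (1 - x) ^ n - (1 - y) ^ n + (1 - x - y) ^ n := by
        nlinarith [mul_nonneg (by linarith : (0:ℝ) ≤ x + y) hF0]
      nlinarith [h2]

/-- `1 - (1-au)ʲ - (1-bu)ʲ + (1-(a+b)u)ʲ ≤ j(j-1) a b u²`. -/
theorem stmt11 : ∀ j : ℕ, 1 ≤ j → ∀ a b : ℝ, 0 ≤ a → 0 ≤ b →
    ∀ u : ℝ, 0 ≤ u → u < 1 / (a + b) →
    1 - (1 - a * u) ^ j - (1 - b * u) ^ j + (1 - (a + b) * u) ^ j ≤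
      (j : ℝ) * ((j : ℝ) - 1) * a * b * u ^ 2 := by
  intro j hj a b ha hb u hu hu2
  have hab : 0 < a + b := by
    rcases lt_or_eq_of_le (by positivity : (0:ℝ) ≤ a + b) with h | h
    · exact h
    · rw [← h] at hu2; simp at hu2; linarith
  have hxy : a * u + b * u ≤ 1 := by
    have := (lt_div_iff₀ hab).mp hu2
    nlinarith
  obtain ⟨-, h2⟩ := stmt11_key j (a*u) (b*u) (by positivity) (by positivity) hxy
  have e : 1 - a*u - b*u = 1 - (a+b)*u := by ring
  rw [e] at h2
  calc 1 - (1 - a * u) ^ j - (1 - b * u) ^ j + (1 - (a + b) * u) ^ j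
      ≤ (j:ℝ) * ((j:ℝ) - 1) * (a*u) * (b*u) := h2
    _ = (j:ℝ) * ((j:ℝ) - 1) * a * b * u ^ 2 := by ring
end

section
/- Let ν be a regularly varying probability distribution on ℝ₊ and λ > 0. Then the compound Poisson distribution CPois(λ,ν) is regularly varying with the same index as ν, and its tail satisfies F̄_{CPois(λ,ν)}(x) ~ λ·F̄_ν(x) as x → ∞. -/
open Filter MeasureTheory

/-- A function is slowly varying if `ℓ(cx)/ℓ(x) → 1` for every `c > 0`. -/
def SlowlyVarying (l : ℝ → ℝ) : Prop :=
  ∀ c : ℝ, 0 < c → Tendsto (fun x => l (c * x) / l x) atTop (nhds 1)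

/-- `j`-fold convolution power of a measure on ℝ. -/
noncomputable def convPowM (ν : Measure ℝ) : ℕ → Measure ℝ
  | 0 => Measure.dirac 0
  | (j + 1) => (convPowM ν j).conv ν

/-- The compound Poisson distribution `CPois(λ, ν)` as a measure on ℝ. -/
noncomputable def cpoisM (lam : ℝ) (ν : Measure ℝ) : Measure ℝ :=
  Measure.sum fun j : ℕ =>
    (ENNReal.ofReal (Real.exp (-lam) * lam ^ j / (Nat.factorial j))) • convPowM ν j

/-- Tail `μ((x, ∞))` of a measure on ℝ. -/
noncomputable def tailM (μ : Measure ℝ) (x : ℝ) : ℝ := (μ (Set.Ioi x)).toReal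

/-! Conditioning on the Poisson count, `F̄_{CPois(λ,ν)} = ∑ⱼ P(N = j) F̄_{ν^{*j}}`. For a regularly
varying tail on `[0, ∞)`, two large jumps are negligible against one, so
`F̄_{ν^{*(j+1)}} ~ F̄_{ν^{*j}} + F̄_ν` and hence `F̄_{ν^{*j}} ~ j F̄_ν`. Kesten's bound
`F̄_{ν^{*j}} ≤ C Kʲ F̄_ν` lets dominated convergence sum these asymptotics to
`F̄_{CPois(λ,ν)} ~ E[N] F̄_ν = λ F̄_ν`, and a tail asymptotic to a regularly varying one is
regularly varying with the same index. -/

open Set Topology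
open scoped Nat

section Tail

variable (μ : Measure ℝ)

lemma tailM_eq_measureReal (x : ℝ) : tailM μ x = μ.real (Ioi x) := rfl

lemma tailM_nonneg (x : ℝ) : 0 ≤ tailM μ x := measureReal_nonneg

lemma tailM_le_one [IsProbabilityMeasure μ] (x : ℝ) : tailM μ x ≤ 1 := measureReal_le_one

lemma tailM_antitone [IsFiniteMeasure μ] : Antitone (tailM μ) := fun _ _ h =>
  measureReal_mono (Ioi_subset_Ioi h)

lemma tendsto_tailM_atTop [IsFiniteMeasure μ] : Tendsto (tailM μ) atTop (𝓝 0) := by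
  have h := tendsto_measure_iInter_atTop (μ := μ) (fun x => measurableSet_Ioi.nullMeasurableSet)
    (fun _ _ h => Ioi_subset_Ioi h) ⟨0, measure_ne_top μ (Ioi 0)⟩
  have hempty : ⋂ x : ℝ, Ioi x = ∅ :=
    iInter_eq_empty_iff.2 fun x => ⟨x, lt_irrefl x⟩
  rw [hempty, measure_empty] at h
  exact (ENNReal.tendsto_toReal ENNReal.zero_ne_top).comp h

lemma tailM_le_inv_mul_tailM [IsProbabilityMeasure μ] {ν : Measure ℝ} [IsFiniteMeasure ν]
    {x y : ℝ} (hy : 0 < tailM ν y) (hxy : x ≤ y) :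
    tailM μ x ≤ (tailM ν y)⁻¹ * tailM ν x := by
  calc tailM μ x ≤ (tailM ν y)⁻¹ * tailM ν y := by
        rw [inv_mul_cancel₀ hy.ne']; exact tailM_le_one μ x
    _ ≤ (tailM ν y)⁻¹ * tailM ν x := by
        gcongr; exact tailM_antitone ν hxy

end Tail

section Convolution

variable (μ ν : Measure ℝ)

lemma tailM_conv [SFinite ν] (x : ℝ) :
    tailM (μ.conv ν) x = (μ.prod ν).real {p | x < p.1 + p.2} := by
  rw [tailM, Measure.conv, Measure.map_apply measurable_add measurableSet_Ioi]
  rfl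

lemma tailM_conv_le [IsProbabilityMeasure μ] [IsProbabilityMeasure ν] {s t x : ℝ}
    (hst : s + t ≤ x) :
    tailM (μ.conv ν) x ≤ tailM μ s + tailM ν s + tailM μ t * tailM ν t := by
  have hsub : {p : ℝ × ℝ | x < p.1 + p.2} ⊆
      (Ioi s ×ˢ univ ∪ univ ×ˢ Ioi s) ∪ Ioi t ×ˢ Ioi t := by
    rintro ⟨a, b⟩ (h : x < a + b)
    by_cases ha : s < a
    · exact Or.inl (Or.inl ⟨ha, trivial⟩)
    by_cases hb : s < b
    · exact Or.inl (Or.inr ⟨trivial, hb⟩)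
    exact Or.inr ⟨show t < a by linarith [not_lt.1 hb], show t < b by linarith [not_lt.1 ha]⟩
  calc tailM (μ.conv ν) x
      ≤ (μ.prod ν).real ((Ioi s ×ˢ univ ∪ univ ×ˢ Ioi s) ∪ Ioi t ×ˢ Ioi t) := by
        rw [tailM_conv]; exact measureReal_mono hsub
    _ ≤ (μ.prod ν).real (Ioi s ×ˢ univ) + (μ.prod ν).real (univ ×ˢ Ioi s)
          + (μ.prod ν).real (Ioi t ×ˢ Ioi t) :=
        (measureReal_union_le _ _).trans (add_le_add_left (measureReal_union_le _ _) _)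
    _ = tailM μ s + tailM ν s + tailM μ t * tailM ν t := by
        simp only [measureReal_prod_prod, tailM_eq_measureReal, probReal_univ, mul_one, one_mul]

lemma le_tailM_conv [IsProbabilityMeasure μ] [IsProbabilityMeasure ν] (hμ : μ (Iio 0) = 0)
    (hν : ν (Iio 0) = 0) {x : ℝ} (hx : 0 ≤ x) :
    tailM μ x + tailM ν x - tailM μ x * tailM ν x ≤ tailM (μ.conv ν) x := by
  have hIci : ∀ (π : Measure ℝ) [IsProbabilityMeasure π], π (Iio 0) = 0 → π.real (Ici 0) = 1 :=
    fun π _ hπ => by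
      rw [← compl_Iio, probReal_compl_eq_one_sub measurableSet_Iio, measureReal_def, hπ]
      simp
  have hsub : Ioi x ×ˢ Ici 0 ∪ Ici 0 ×ˢ Ioi x ⊆ {p : ℝ × ℝ | x < p.1 + p.2} := by
    rintro ⟨a, b⟩ (⟨ha, hb⟩ | ⟨ha, hb⟩) <;> simp only [mem_Ioi, mem_Ici] at ha hb <;>
      show x < a + b <;> linarith
  have hinter : Ioi x ×ˢ Ici 0 ∩ Ici 0 ×ˢ Ioi x = Ioi x ×ˢ Ioi x := by
    rw [prod_inter_prod, inter_eq_left.2 (Ioi_subset_Ici hx),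
      inter_eq_right.2 (Ioi_subset_Ici hx)]
  have hunion := measureReal_union_add_inter (μ := μ.prod ν) (s := Ioi x ×ˢ Ici 0)
    (t := Ici 0 ×ˢ Ioi x) (measurableSet_Ici.prod measurableSet_Ioi)
  rw [hinter] at hunion
  simp only [measureReal_prod_prod, hIci μ hμ, hIci ν hν, mul_one, one_mul] at hunion
  have hmono := measureReal_mono (μ := μ.prod ν) hsub
  rw [← tailM_conv] at hmono
  simp only [tailM_eq_measureReal] at hmono ⊢
  linarith

lemma conv_Iio_zero [SFinite μ] [SFinite ν] (hμ : μ (Iio 0) = 0) (hν : ν (Iio 0) = 0) :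
    (μ.conv ν) (Iio 0) = 0 := by
  rw [Measure.conv, Measure.map_apply measurable_add measurableSet_Iio]
  refine measure_mono_null (t := Iio 0 ×ˢ univ ∪ univ ×ˢ Iio 0) ?_ (measure_union_null ?_ ?_)
  · rintro ⟨a, b⟩ (h : a + b < 0)
    by_cases ha : a < 0
    · exact Or.inl ⟨ha, trivial⟩
    · exact Or.inr ⟨trivial, show b < 0 by linarith [not_lt.1 ha]⟩
  · rw [Measure.prod_prod, hμ, zero_mul]
  · rw [Measure.prod_prod, hν, mul_zero]

end Convolution

section ConvolutionPower

variable (ν : Measure ℝ)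

instance isProbabilityMeasure_convPowM [IsProbabilityMeasure ν] (j : ℕ) :
    IsProbabilityMeasure (convPowM ν j) := by
  induction j with
  | zero => rw [convPowM]; infer_instance
  | succ j ih => rw [convPowM]; infer_instance

lemma convPowM_Iio_zero [IsProbabilityMeasure ν] (hν : ν (Iio 0) = 0) (j : ℕ) :
    convPowM ν j (Iio 0) = 0 := by
  induction j with
  | zero => simp [convPowM, Measure.dirac_apply' _ measurableSet_Iio]
  | succ j ih => exact conv_Iio_zero _ _ ih hν

lemma tailM_convPowM_zero {x : ℝ} (hx : 0 ≤ x) : tailM (convPowM ν 0) x = 0 := by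
  simp [tailM, convPowM, Measure.dirac_apply' _ measurableSet_Ioi, not_lt.2 hx]

end ConvolutionPower

def IsRegularlyVarying (F : ℝ → ℝ) (ρ : ℝ) : Prop :=
  ∀ c : ℝ, 0 < c → Tendsto (fun x => F (c * x) / F x) atTop (𝓝 (c ^ ρ))

lemma SlowlyVarying.isRegularlyVarying_of_eq_rpow_mul {l F : ℝ → ℝ} (hl : SlowlyVarying l)
    {ρ : ℝ} (hF : ∀ x, 0 < x → F x = x ^ ρ * l x) : IsRegularlyVarying F ρ := by
  intro c hc
  have h := (hl c hc).const_mul (c ^ ρ)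
  rw [mul_one] at h
  refine h.congr' ?_
  filter_upwards [eventually_gt_atTop 0] with x hx
  rw [hF x hx, hF _ (mul_pos hc hx), Real.mul_rpow hc.le hx.le, mul_assoc, mul_div_assoc,
    mul_div_mul_left _ _ (Real.rpow_pos_of_pos hx ρ).ne']

namespace IsRegularlyVarying

variable {F G : ℝ → ℝ} {ρ : ℝ}

lemma eventually_ne_zero (hF : IsRegularlyVarying F ρ) : ∀ᶠ x in atTop, F x ≠ 0 := by
  have h := (hF 1 one_pos).eventually_ne (by rw [Real.one_rpow]; exact one_ne_zero)
  filter_upwards [h] with x hx h0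
  exact hx (by rw [h0, div_zero])

lemma tailM_pos {μ : Measure ℝ} [IsFiniteMeasure μ] (hF : IsRegularlyVarying (tailM μ) ρ)
    (x : ℝ) : 0 < tailM μ x := by
  obtain ⟨y, hy, hxy⟩ := (hF.eventually_ne_zero.and (eventually_ge_atTop x)).exists
  exact ((tailM_nonneg μ y).lt_of_ne' hy).trans_le (tailM_antitone μ hxy)

lemma of_tendsto_div (hF : IsRegularlyVarying F ρ) {a : ℝ} (ha : a ≠ 0)
    (hG : Tendsto (fun x => G x / F x) atTop (𝓝 a)) : IsRegularlyVarying G ρ := by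
  intro c hc
  have hc' : Tendsto (fun x => c * x) atTop atTop := tendsto_id.const_mul_atTop hc
  have h := ((hG.comp hc').div hG ha).mul (hF c hc)
  rw [div_self ha, one_mul] at h
  refine h.congr' ?_
  filter_upwards [hF.eventually_ne_zero, hc'.eventually hF.eventually_ne_zero] with x hx hcx
  show G (c * x) / F (c * x) / (G x / F x) * (F (c * x) / F x) = G (c * x) / G x
  rcases eq_or_ne (G x) 0 with hGx | hGx
  · simp [hGx]
  · field_simp

lemma slowlyVarying_rpow_mul {α : ℝ} (hG : IsRegularlyVarying G (-α)) :
    SlowlyVarying (fun x => x ^ α * G x) := by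
  intro c hc
  have h := (hG c hc).const_mul (c ^ α)
  rw [← Real.rpow_add hc, add_neg_cancel, Real.rpow_zero] at h
  refine h.congr' ?_
  filter_upwards [eventually_gt_atTop 0] with x hx
  rw [Real.mul_rpow hc.le hx.le, mul_assoc, mul_div_assoc,
    mul_div_mul_left _ _ (Real.rpow_pos_of_pos hx α).ne']

end IsRegularlyVarying

section TailAsymptotics

variable {μ ν : Measure ℝ} [IsProbabilityMeasure ν] {ρ a : ℝ}

lemma tendsto_tailM_conv_bound_div (hF : IsRegularlyVarying (tailM ν) ρ)
    (ha : Tendsto (fun x => tailM μ x / tailM ν x) atTop (𝓝 a)) {c : ℝ} (hc0 : 0 < c)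
    (hc1 : c < 1) :
    Tendsto (fun x => (tailM μ (c * x) + tailM ν (c * x)
        + tailM μ ((1 - c) * x) * tailM ν ((1 - c) * x)) / tailM ν x)
      atTop (𝓝 ((a + 1) * c ^ ρ)) := by
  have hd0 : 0 < 1 - c := sub_pos.2 hc1
  have hc : Tendsto (fun x => c * x) atTop atTop := tendsto_id.const_mul_atTop hc0
  have hd : Tendsto (fun x => (1 - c) * x) atTop atTop := tendsto_id.const_mul_atTop hd0
  have hmain := ((ha.comp hc).add_const 1).mul (hF c hc0)
  have hcross := ((ha.comp hd).mul (hF (1 - c) hd0)).mul ((tendsto_tailM_atTop ν).comp hd)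
  rw [mul_zero] at hcross
  have h := hmain.add hcross
  rw [add_zero] at h
  refine h.congr fun x => ?_
  have := (hF.tailM_pos (c * x)).ne'
  have := (hF.tailM_pos ((1 - c) * x)).ne'
  have := (hF.tailM_pos x).ne'
  simp only [Function.comp_apply]
  field_simp

lemma tendsto_tailM_conv_div [IsProbabilityMeasure μ] (hμ : μ (Iio 0) = 0) (hν : ν (Iio 0) = 0)
    (hF : IsRegularlyVarying (tailM ν) ρ)
    (ha : Tendsto (fun x => tailM μ x / tailM ν x) atTop (𝓝 a)) :
    Tendsto (fun x => tailM (μ.conv ν) x / tailM ν x) atTop (𝓝 (a + 1)) := by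
  have hFpos := hF.tailM_pos
  refine tendsto_order.2 ⟨fun b hb => ?_, fun b hb => ?_⟩
  · have hlow : Tendsto (fun x => tailM μ x / tailM ν x + 1 - tailM μ x) atTop (𝓝 (a + 1)) := by
      simpa using (ha.add_const 1).sub (tendsto_tailM_atTop μ)
    filter_upwards [hlow.eventually (eventually_gt_nhds hb), eventually_ge_atTop 0]
      with x hbx hx
    refine hbx.trans_le ((le_div_iff₀ (hFpos x)).2 ?_)
    calc (tailM μ x / tailM ν x + 1 - tailM μ x) * tailM ν x
        = tailM μ x + tailM ν x - tailM μ x * tailM ν x := by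
          field_simp [(hFpos x).ne']
      _ ≤ tailM (μ.conv ν) x := le_tailM_conv μ ν hμ hν hx
  · -- the upper bound splits `x = c x + (1 - c) x` with `c` close to `1`
    obtain ⟨c, hcb, hc0, hc1⟩ : ∃ c, (a + 1) * c ^ ρ < b ∧ 0 < c ∧ c < 1 := by
      have hcont : Tendsto (fun c : ℝ => (a + 1) * c ^ ρ) (𝓝[<] 1) (𝓝 (a + 1)) := by
        simpa using ((Real.continuousAt_rpow_const 1 ρ (Or.inl one_ne_zero)).tendsto.const_mul
          (a + 1)).mono_left nhdsWithin_le_nhds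
      exact ((hcont.eventually (eventually_lt_nhds hb)).and (Ioo_mem_nhdsLT zero_lt_one)).exists
    filter_upwards [(tendsto_tailM_conv_bound_div hF ha hc0 hc1).eventually
      (eventually_lt_nhds hcb)] with x hx
    refine lt_of_le_of_lt (div_le_div_of_nonneg_right ?_ (hFpos x).le) hx
    exact tailM_conv_le μ ν (le_of_eq (by ring))

lemma tendsto_tailM_convPowM_div (hν : ν (Iio 0) = 0) (hF : IsRegularlyVarying (tailM ν) ρ)
    (j : ℕ) :
    Tendsto (fun x => tailM (convPowM ν j) x / tailM ν x) atTop (𝓝 j) := by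
  induction j with
  | zero =>
    refine tendsto_const_nhds.congr' ?_
    filter_upwards [eventually_ge_atTop 0] with x hx
    rw [tailM_convPowM_zero ν hx, zero_div, Nat.cast_zero]
  | succ j ih =>
    push_cast
    exact tendsto_tailM_conv_div (convPowM_Iio_zero ν hν j) hν hF ih

end TailAsymptotics

/-- A Kesten-type bound. -/
lemma exists_tailM_convPowM_le {ν : Measure ℝ} [IsProbabilityMeasure ν]
    (hFpos : ∀ x, 0 < tailM ν x) {Q : ℝ}
    (hdom : ∀ᶠ x in atTop, tailM ν (2⁻¹ * x) ≤ Q * tailM ν x) :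
    ∃ C K : ℝ, ∀ j x, tailM (convPowM ν j) x ≤ C * K ^ j * tailM ν x := by
  obtain ⟨X, hX⟩ := eventually_atTop.1 hdom
  set X₀ := max X 0
  set C := max 1 (tailM ν X₀)⁻¹
  set K := max 1 (3 * Q)
  have hC : 1 ≤ C := le_max_left _ _
  have hK : 1 ≤ K := le_max_left _ _
  have hsmall : ∀ (μ : Measure ℝ) [IsProbabilityMeasure μ] (j : ℕ) (x : ℝ), x < X₀ →
      tailM μ x ≤ C * K ^ j * tailM ν x := by
    intro μ _ j x hx
    calc tailM μ x ≤ (tailM ν X₀)⁻¹ * tailM ν x := tailM_le_inv_mul_tailM μ (hFpos X₀) hx.le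
      _ ≤ C * K ^ j * tailM ν x := by
        refine mul_le_mul_of_nonneg_right ?_ (tailM_nonneg ν x)
        calc (tailM ν X₀)⁻¹ ≤ C := le_max_right _ _
          _ ≤ C * K ^ j := le_mul_of_one_le_right (by positivity) (one_le_pow₀ hK)
  refine ⟨C, K, fun j => ?_⟩
  induction j with
  | zero =>
    intro x
    rcases lt_or_ge x X₀ with hx | hx
    · exact hsmall _ 0 x hx
    · rw [tailM_convPowM_zero ν (le_trans (le_max_right _ _) hx)]
      exact mul_nonneg (by positivity) (tailM_nonneg ν x)
  | succ j ih =>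
    intro x
    rcases lt_or_ge x X₀ with hx | hx
    · exact hsmall _ _ x hx
    set y := 2⁻¹ * x
    have hCK : 1 ≤ C * K ^ j := one_le_mul_of_one_le_of_one_le hC (one_le_pow₀ hK)
    have hTy := tailM_nonneg (convPowM ν j) y
    calc tailM (convPowM ν (j + 1)) x
        ≤ tailM (convPowM ν j) y + tailM ν y + tailM (convPowM ν j) y * tailM ν y :=
          tailM_conv_le _ _ (le_of_eq (by ring))
      _ ≤ 2 * tailM (convPowM ν j) y + tailM ν y := by
          nlinarith [tailM_le_one ν y]
      _ ≤ (2 * (C * K ^ j) + 1) * tailM ν y := by linarith [ih y]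
      _ ≤ 3 * (C * K ^ j) * tailM ν y := by nlinarith [tailM_nonneg ν y]
      _ ≤ 3 * (C * K ^ j) * (Q * tailM ν x) := by
          gcongr
          exact hX x (le_trans (le_max_left _ _) hx)
      _ = C * K ^ j * (3 * Q) * tailM ν x := by ring
      _ ≤ C * K ^ (j + 1) * tailM ν x := by
          rw [pow_succ, ← mul_assoc C]
          exact mul_le_mul_of_nonneg_right
            (mul_le_mul_of_nonneg_left (le_max_right 1 (3 * Q)) (by positivity))
            (tailM_nonneg ν x)

lemma hasSum_poisson_mul_nat (r : ℝ) :
    HasSum (fun j : ℕ => Real.exp (-r) * r ^ j / (j)! * j) r := by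
  have h := (NormedSpace.expSeries_div_hasSum_exp r).mul_left (r * Real.exp (-r))
  rw [← Real.exp_eq_exp_ℝ, mul_assoc, ← Real.exp_add, neg_add_cancel, Real.exp_zero,
    mul_one] at h
  refine (hasSum_nat_add_iff' 1).1 ?_
  simp only [Finset.range_one, Finset.sum_singleton, Nat.cast_zero, mul_zero, sub_zero]
  refine h.congr_fun fun j => ?_
  rw [Nat.factorial_succ, pow_succ]
  push_cast
  field_simp

lemma tailM_cpoisM {lam : ℝ} (hlam : 0 ≤ lam) (ν : Measure ℝ) [IsProbabilityMeasure ν] (x : ℝ) :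
    tailM (cpoisM lam ν) x
      = ∑' j : ℕ, Real.exp (-lam) * lam ^ j / (j)! * tailM (convPowM ν j) x := by
  rw [tailM, cpoisM, Measure.sum_apply _ measurableSet_Ioi, ENNReal.tsum_toReal_eq]
  · congr 1 with j
    rw [Measure.smul_apply, smul_eq_mul, ENNReal.toReal_mul, ENNReal.toReal_ofReal (by positivity)]
    rfl
  · exact fun j => ENNReal.mul_ne_top ENNReal.ofReal_ne_top (measure_ne_top _ _)

theorem tendsto_tailM_cpoisM_div {ν : Measure ℝ} [IsProbabilityMeasure ν] (hν : ν (Iio 0) = 0)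
    {lam : ℝ} (hlam : 0 ≤ lam) {ρ : ℝ} (hF : IsRegularlyVarying (tailM ν) ρ) :
    Tendsto (fun x => tailM (cpoisM lam ν) x / tailM ν x) atTop (𝓝 lam) := by
  have hFpos := hF.tailM_pos
  set p : ℕ → ℝ := fun j => Real.exp (-lam) * lam ^ j / (j)!
  have hdom : ∀ᶠ x in atTop, tailM ν (2⁻¹ * x) ≤ ((2⁻¹ : ℝ) ^ ρ + 1) * tailM ν x := by
    filter_upwards [(hF 2⁻¹ (by norm_num)).eventually (eventually_lt_nhds (lt_add_one _))]
      with x hx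
    exact (div_le_iff₀ (hFpos x)).1 hx.le
  obtain ⟨C, K, hCK⟩ := exists_tailM_convPowM_le hFpos hdom
  have hsum : Summable fun j => p j * (C * K ^ j) := by
    refine ((Real.summable_pow_div_factorial (lam * K)).mul_left (Real.exp (-lam) * C)).congr
      fun j => ?_
    simp only [p, mul_pow]
    ring
  have hbound : ∀ x j, ‖p j * (tailM (convPowM ν j) x / tailM ν x)‖ ≤ p j * (C * K ^ j) :=
    fun x j => by
      rw [Real.norm_of_nonneg (by positivity [tailM_nonneg (convPowM ν j) x, (hFpos x).le])]
      gcongr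
      exact (div_le_iff₀ (hFpos x)).2 (hCK j x)
  have h := tendsto_tsum_of_dominated_convergence hsum
    (fun j => (tendsto_tailM_convPowM_div hν hF j).const_mul (p j))
    (Eventually.of_forall hbound)
  rw [(hasSum_poisson_mul_nat lam).tsum_eq] at h
  refine h.congr fun x => ?_
  simp only [tailM_cpoisM hlam, ← tsum_div_const, mul_div_assoc, p]

theorem stmt16_general (ν : Measure ℝ) [IsProbabilityMeasure ν] (hpos : ν (Set.Iio 0) = 0)
    (lam : ℝ) (hlam : 0 < lam)
    (α : ℝ)
    (l : ℝ → ℝ) (hl : SlowlyVarying l)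
    (htail : ∀ x : ℝ, 0 < x → tailM ν x = x ^ (-α) * l x) :
    (∃ l' : ℝ → ℝ, SlowlyVarying l' ∧
        ∀ᶠ x in atTop, tailM (cpoisM lam ν) x = x ^ (-α) * l' x) ∧
      Tendsto (fun x => tailM (cpoisM lam ν) x / (lam * tailM ν x)) atTop (nhds 1) := by
  have hF : IsRegularlyVarying (tailM ν) (-α) := hl.isRegularlyVarying_of_eq_rpow_mul htail
  have hlim := tendsto_tailM_cpoisM_div hpos hlam.le hF
  have hT : IsRegularlyVarying (tailM (cpoisM lam ν)) (-α) := hF.of_tendsto_div hlam.ne' hlim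
  refine ⟨⟨fun x => x ^ α * tailM (cpoisM lam ν) x, hT.slowlyVarying_rpow_mul, ?_⟩, ?_⟩
  · filter_upwards [eventually_gt_atTop 0] with x hx
    rw [← mul_assoc, ← Real.rpow_add hx, neg_add_cancel, Real.rpow_zero, one_mul]
  · have h := hlim.div_const lam
    rw [div_self hlam.ne'] at h
    simpa only [div_div, mul_comm lam] using h

/-- a compound Poisson distribution with regularly varying jump distribution
is regularly varying with the same index, with tail `~ λ F̄_ν(x)`. -/
theorem stmt16 (ν : Measure ℝ) [IsProbabilityMeasure ν] (hpos : ν (Set.Iio 0) = 0)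
    (lam : ℝ) (hlam : 0 < lam)
    (α : ℝ) (hα : 0 < α)
    (l : ℝ → ℝ) (hl : SlowlyVarying l)
    (htail : ∀ x : ℝ, 0 < x → tailM ν x = x ^ (-α) * l x) :
    (∃ l' : ℝ → ℝ, SlowlyVarying l' ∧
        ∀ᶠ x in atTop, tailM (cpoisM lam ν) x = x ^ (-α) * l' x) ∧
      Tendsto (fun x => tailM (cpoisM lam ν) x / (lam * tailM ν x)) atTop (nhds 1) :=
  stmt16_general ν hpos lam hlam α l hl htail
end
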